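/- arXiv:2310.14991 — 2 statements merged into one kernel-verified Lean document; each statement's English description precedes it below -/
import Mathlib

section
/- Let n, k ∈ ℕ with 1 < k < n and k - (k mod 2) ≥ 2√n (equivalently, (k - k mod 2)² ≥ 4n). Then there exists an (n,k)-selection mechanism that is impartial and (2/k)-optimal. -/
open Finset

/-- A valid weight matrix: nonnegative entries and zero diagonal. -/
def IsValidMatrix {n : ℕ} (A : Matrix (Fin n) (Fin n) ℝ) : Prop :=
  (∀ i j, 0 ≤ A i j) ∧ ∀ i, A i i = 0

/-- Score of a subset `S` of agents: total weight of votes received by members of `S`. -/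
def score {n : ℕ} (A : Matrix (Fin n) (Fin n) ℝ) (S : Finset (Fin n)) : ℝ :=
  ∑ i : Fin n, ∑ j ∈ S, A i j

/-- The maximum score over all subsets of cardinality `k`. -/
noncomputable def optScore {n : ℕ} (k : ℕ) (A : Matrix (Fin n) (Fin n) ℝ) : ℝ :=
  sSup {x : ℝ | ∃ S : Finset (Fin n), S.card = k ∧ score A S = x}

/-- Impartiality: an agent cannot influence its own selection. -/
def Impartial {n : ℕ} (f : Matrix (Fin n) (Fin n) ℝ → Finset (Fin n)) : Prop :=
  ∀ A A' : Matrix (Fin n) (Fin n) ℝ, IsValidMatrix A → IsValidMatrix A' →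
    ∀ i : Fin n, (∀ i', i' ≠ i → A i' = A' i') → (i ∈ f A ↔ i ∈ f A')

/-- `α`-optimality of an `(n,k)`-selection mechanism. -/
def AlphaOptimal {n : ℕ} (k : ℕ) (f : Matrix (Fin n) (Fin n) ℝ → Finset (Fin n))
    (α : ℝ) : Prop :=
  ∀ A : Matrix (Fin n) (Fin n) ℝ, IsValidMatrix A → α * optScore k A ≤ score A (f A)

/-!
Place the agents in a `q × q` grid (`q = ⌊k/2⌋`, agent `j` in row `j / q` and column `j % q`).
Each row elects the member with the most votes from *other* rows, and each column elects the
member with the most votes from *inside its own row*. An agent's ballot never counts towards the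
quantity on which it competes, which gives impartiality, and at most `2q ≤ k` agents are elected.
Every vote an agent receives either comes from another row or from its own row, and each row or
column has at most `q` members, so the `q`-fold total of the elected agents' scores bounds the score
of all agents, hence `optScore k A`.
-/

section ClassWinners

variable {ι β : Type*} [Fintype ι] [LinearOrder ι]

open Classical in
/-- The `v`-maximiser of each class of `c`, made unique by comparing `(v j, j)`
lexicographically. -/
noncomputable def classWinners (c : ι → β) (v : ι → ℝ) : Finset ι :=
  {j | ∀ j', c j' = c j → toLex (v j', j') ≤ toLex (v j, j)}

theorem mem_classWinners {c : ι → β} {v : ι → ℝ} {j : ι} :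
    j ∈ classWinners c v ↔ ∀ j', c j' = c j → toLex (v j', j') ≤ toLex (v j, j) := by
  simp [classWinners]

theorem classWinners_injOn (c : ι → β) (v : ι → ℝ) : Set.InjOn c (classWinners c v) := by
  intro a ha b hb hab
  have h := le_antisymm (mem_classWinners.1 hb a hab) (mem_classWinners.1 ha b hab.symm)
  exact congrArg (fun x => (ofLex x).2) h

theorem exists_mem_classWinners (c : ι → β) (v : ι → ℝ) (j : ι) :
    ∃ w ∈ classWinners c v, c w = c j ∧ v j ≤ v w := by
  classical
  obtain ⟨w, hw, hmax⟩ :=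
    exists_max_image {j' | c j' = c j} (fun j' => toLex (v j', j')) ⟨j, by simp⟩
  rw [mem_filter] at hw
  refine ⟨w, mem_classWinners.2 fun j' hj' => hmax j' ?_, hw.2, ?_⟩
  · simp [hj', hw.2]
  · exact Prod.Lex.monotone_fst _ _ (hmax j (by simp))

theorem mem_classWinners_congr {c : ι → β} {v v' : ι → ℝ} {i : ι}
    (h : ∀ j, c j = c i → v j = v' j) :
    i ∈ classWinners c v ↔ i ∈ classWinners c v' := by
  simp only [mem_classWinners]
  refine forall_congr' fun j => imp_congr_right fun hj => ?_
  rw [h j hj, h i rfl]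

theorem sum_le_mul_sum_classWinners [DecidableEq β] {c : ι → β} {v : ι → ℝ} {q : ℕ}
    (hv : ∀ j, 0 ≤ v j) (hc : ∀ j, #{j' | c j' = c j} ≤ q) :
    ∑ j, v j ≤ q * ∑ w ∈ classWinners c v, v w := by
  choose win hwin hcw hle using exists_mem_classWinners c v
  have hfiber : ∀ w, #{j | win j = w} ≤ q := fun w =>
    (card_le_card fun j hj => by
      simp only [mem_filter, mem_univ, true_and] at hj ⊢
      rw [← hcw j, hj]).trans (hc w)
  calc ∑ j, v j ≤ ∑ j, v (win j) := sum_le_sum fun j _ => hle j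
    _ = ∑ w ∈ univ.image win, #{j | win j = w} • v w := sum_comp v win
    _ ≤ ∑ w ∈ univ.image win, q * v w := sum_le_sum fun w _ => by
        rw [nsmul_eq_mul]
        exact mul_le_mul_of_nonneg_right (by exact_mod_cast hfiber w) (hv w)
    _ ≤ ∑ w ∈ classWinners c v, q * v w :=
        sum_le_sum_of_subset_of_nonneg (image_subset_iff.2 fun j _ => hwin j)
          fun w _ _ => mul_nonneg q.cast_nonneg (hv w)
    _ = q * ∑ w ∈ classWinners c v, v w := (mul_sum _ _ _).symm

end ClassWinners

section Votes

variable {ι β : Type*} [Fintype ι] [DecidableEq β]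

def outsideVotes (b : ι → β) (A : Matrix ι ι ℝ) (j : ι) : ℝ :=
  ∑ i with b i ≠ b j, A i j

def insideVotes [DecidableEq ι] (b : ι → β) (A : Matrix ι ι ℝ) (j : ι) : ℝ :=
  ∑ i ∈ ({i | b i = b j} : Finset ι).erase j, A i j

theorem outsideVotes_add_insideVotes [DecidableEq ι] (b : ι → β) {A : Matrix ι ι ℝ} {j : ι}
    (hA : A j j = 0) : outsideVotes b A j + insideVotes b A j = ∑ i, A i j := by
  rw [insideVotes, sum_erase (f := fun i => A i j) _ hA, add_comm]
  exact sum_filter_add_sum_filter_not _ _ _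

theorem outsideVotes_nonneg (b : ι → β) {A : Matrix ι ι ℝ} (hA : ∀ i j, 0 ≤ A i j) (j : ι) :
    0 ≤ outsideVotes b A j :=
  sum_nonneg fun i _ => hA i j

theorem insideVotes_nonneg [DecidableEq ι] (b : ι → β) {A : Matrix ι ι ℝ}
    (hA : ∀ i j, 0 ≤ A i j) (j : ι) : 0 ≤ insideVotes b A j :=
  sum_nonneg fun i _ => hA i j

end Votes

theorem sum_apply_eq_of_notMem {ι : Type*} {A A' : Matrix ι ι ℝ} {s : Finset ι} {i : ι}
    (hi : i ∉ s) (h : ∀ i' ≠ i, A i' = A' i') (j : ι) : ∑ i' ∈ s, A i' j = ∑ i' ∈ s, A' i' j :=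
  sum_congr rfl fun i' hi' => by rw [h i' (ne_of_mem_of_not_mem hi' hi)]

theorem card_le_of_injOn_lt {ι : Type*} {s : Finset ι} {g : ι → ℕ} {q : ℕ}
    (hg : ∀ i ∈ s, g i < q) (hinj : Set.InjOn g s) : #s ≤ q := by
  simpa using card_le_card_of_injOn (t := range q) g (fun i hi => mem_range.2 (hg i hi)) hinj

theorem score_nonneg {n : ℕ} {A : Matrix (Fin n) (Fin n) ℝ} (hA : IsValidMatrix A)
    (S : Finset (Fin n)) : 0 ≤ score A S :=
  sum_nonneg fun i _ => sum_nonneg fun j _ => hA.1 i j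

theorem score_le_score_univ {n : ℕ} {A : Matrix (Fin n) (Fin n) ℝ} (hA : IsValidMatrix A)
    (S : Finset (Fin n)) : score A S ≤ score A univ :=
  sum_le_sum fun i _ => sum_le_sum_of_subset_of_nonneg (subset_univ S) fun j _ _ => hA.1 i j

theorem score_eq_sum_outsideVotes_add_sum_insideVotes {n : ℕ} {β : Type*} [DecidableEq β]
    (b : Fin n → β) {A : Matrix (Fin n) (Fin n) ℝ} (hA : IsValidMatrix A) (S : Finset (Fin n)) :
    score A S = ∑ j ∈ S, outsideVotes b A j + ∑ j ∈ S, insideVotes b A j := by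
  rw [← sum_add_distrib]
  exact sum_comm.trans (sum_congr rfl fun j _ => (outsideVotes_add_insideVotes b (hA.2 j)).symm)

theorem optScore_le_score_univ {n : ℕ} (k : ℕ) {A : Matrix (Fin n) (Fin n) ℝ}
    (hA : IsValidMatrix A) : optScore k A ≤ score A univ :=
  Real.sSup_le (fun _ ⟨S, _, hS⟩ => hS ▸ score_le_score_univ hA S)
    (score_nonneg hA univ)

section Grid

variable {n q : ℕ}

theorem Fin.val_div_lt_of_le_mul_self (hn : n ≤ q * q) (j : Fin n) : j.val / q < q :=
  Nat.div_lt_of_lt_mul (j.2.trans_le hn)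

theorem Fin.val_mod_lt_of_le_mul_self (hn : n ≤ q * q) (j : Fin n) : j.val % q < q :=
  Nat.mod_lt _ (Nat.pos_of_mul_pos_left ((Nat.zero_le _).trans_lt (j.2.trans_le hn)))

theorem card_filter_val_div_eq_le (hn : n ≤ q * q) (t : ℕ) : #{j : Fin n | j.val / q = t} ≤ q :=
  card_le_of_injOn_lt (fun j _ => Fin.val_mod_lt_of_le_mul_self hn j) fun _ ha _ hb hab =>
    Fin.ext (Nat.ext_div_mod ((mem_filter.1 ha).2.trans (mem_filter.1 hb).2.symm) hab)

theorem card_filter_val_mod_eq_le (hn : n ≤ q * q) (t : ℕ) : #{j : Fin n | j.val % q = t} ≤ q :=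
  card_le_of_injOn_lt (fun j _ => Fin.val_div_lt_of_le_mul_self hn j) fun _ ha _ hb hab =>
    Fin.ext (Nat.ext_div_mod hab ((mem_filter.1 ha).2.trans (mem_filter.1 hb).2.symm))

variable (q) in
noncomputable def gridSelection (A : Matrix (Fin n) (Fin n) ℝ) : Finset (Fin n) :=
  classWinners (fun j => j.val / q) (outsideVotes (fun j => j.val / q) A) ∪
    classWinners (fun j => j.val % q) (insideVotes (fun j => j.val / q) A)

theorem card_gridSelection_le (hn : n ≤ q * q) (A : Matrix (Fin n) (Fin n) ℝ) :
    #(gridSelection q A) ≤ 2 * q := by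
  have hrow := card_le_of_injOn_lt (fun j _ => Fin.val_div_lt_of_le_mul_self hn j)
    (classWinners_injOn (fun j : Fin n => j.val / q) (outsideVotes (fun j => j.val / q) A))
  have hcol := card_le_of_injOn_lt (fun j _ => Fin.val_mod_lt_of_le_mul_self hn j)
    (classWinners_injOn (fun j : Fin n => j.val % q) (insideVotes (fun j => j.val / q) A))
  exact (card_union_le _ _).trans (by omega)

variable (q) in
theorem gridSelection_impartial : Impartial (gridSelection (n := n) q) := by
  intro A A' _ _ i h
  simp only [gridSelection, mem_union]
  congr! 1
  · refine mem_classWinners_congr fun j hj => sum_apply_eq_of_notMem ?_ h j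
    simp [hj]
  · refine mem_classWinners_congr fun j hj => sum_apply_eq_of_notMem ?_ h j
    -- `i` and `j` share a column, so they share a row only if `i = j`
    simp only [mem_erase, mem_filter, mem_univ, true_and, not_and]
    exact fun hij hrow => hij (Fin.ext (Nat.ext_div_mod hrow hj.symm))

theorem score_univ_le_mul_score_gridSelection (hn : n ≤ q * q) {A : Matrix (Fin n) (Fin n) ℝ}
    (hA : IsValidMatrix A) : score A univ ≤ q * score A (gridSelection q A) := by
  have hout := outsideVotes_nonneg (fun j : Fin n => j.val / q) hA.1
  have hin := insideVotes_nonneg (fun j : Fin n => j.val / q) hA.1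
  simp only [score_eq_sum_outsideVotes_add_sum_insideVotes (fun j : Fin n => j.val / q) hA,
    mul_add]
  gcongr
  · refine (sum_le_mul_sum_classWinners hout fun j => card_filter_val_div_eq_le hn _).trans ?_
    exact mul_le_mul_of_nonneg_left
      (sum_le_sum_of_subset_of_nonneg subset_union_left fun j _ _ => hout j) q.cast_nonneg
  · refine (sum_le_mul_sum_classWinners hin fun j => card_filter_val_mod_eq_le hn _).trans ?_
    exact mul_le_mul_of_nonneg_left
      (sum_le_sum_of_subset_of_nonneg subset_union_right fun j _ _ => hin j) q.cast_nonneg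

end Grid

theorem stmt1_general (n k : ℕ) (h3 : 4 * n ≤ (k - k % 2) ^ 2) :
    ∃ f : Matrix (Fin n) (Fin n) ℝ → Finset (Fin n),
      (∀ A, (f A).card ≤ k) ∧ Impartial f ∧ AlphaOptimal k f (2 / (k : ℝ)) := by
  set q := (k - k % 2) / 2
  have hqk : 2 * q ≤ k := by omega
  have hn : n ≤ q * q := by
    rw [show k - k % 2 = 2 * q by omega] at h3
    nlinarith
  refine ⟨gridSelection q, fun A => (card_gridSelection_le hn A).trans hqk,
    gridSelection_impartial q, fun A hA => ?_⟩
  calc 2 / (k : ℝ) * optScore k A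
      ≤ 2 / k * (q * score A (gridSelection q A)) := by
        gcongr
        exact (optScore_le_score_univ k hA).trans (score_univ_le_mul_score_gridSelection hn hA)
    _ = (2 * q : ℕ) / (k : ℝ) * score A (gridSelection q A) := by push_cast; ring
    _ ≤ score A (gridSelection q A) :=
        mul_le_of_le_one_left (score_nonneg hA _)
          (div_le_one_of_le₀ (by exact_mod_cast hqk) k.cast_nonneg)

/-- For `1 < k < n` and `k - k % 2 ≥ 2√n`, there exists an impartial
`(n,k)`-selection mechanism that is `(2/k)`-optimal. -/
theorem stmt1 (n k : ℕ) (h1 : 1 < k) (h2 : k < n) (h3 : 4 * n ≤ (k - k % 2) ^ 2) :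
    ∃ f : Matrix (Fin n) (Fin n) ℝ → Finset (Fin n),
      (∀ A, (f A).card ≤ k) ∧ Impartial f ∧ AlphaOptimal k f (2 / (k : ℝ)) :=
  stmt1_general n k h3
end

section
/- Let ñ, m, k̃ ∈ ℕ with m·k̃ ≤ ñ and suppose there exists an impartial and α̃-optimal (ñ, m, k̃)-assignment mechanism. Then for all k, n ∈ ℕ with k̃ ≤ k, n ≤ ñ, k < n, and m·k ≤ n, there exists an impartial and α-optimal (n, m, k)-assignment mechanism with α = (k̃/k)·α̃. -/
open Finset

/-- A feasible assignment: `m` pairwise disjoint sets of agents, each of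
cardinality at most `k`. -/
def FeasibleAssignment {n : ℕ} (m k : ℕ) (X : Fin m → Finset (Fin n)) : Prop :=
  (∀ ℓ, (X ℓ).card ≤ k) ∧ ∀ ℓ ℓ', ℓ ≠ ℓ' → Disjoint (X ℓ) (X ℓ')

/-- Total score of an assignment: the sum over the jobs of the score of the set
assigned to each job. -/
def totalScore {n m : ℕ} (A : Fin m → Matrix (Fin n) (Fin n) ℝ)
    (X : Fin m → Finset (Fin n)) : ℝ :=
  ∑ ℓ, score (A ℓ) (X ℓ)

/-- The maximum total score over all feasible assignments with capacity `k`. -/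
noncomputable def optAssign {n : ℕ} (m k : ℕ)
    (A : Fin m → Matrix (Fin n) (Fin n) ℝ) : ℝ :=
  sSup {x : ℝ | ∃ X : Fin m → Finset (Fin n),
    FeasibleAssignment m k X ∧ totalScore A X = x}

/-- Impartiality of an `(n,m,k)`-assignment mechanism. -/
def ImpartialAssign {n m : ℕ}
    (f : (Fin m → Matrix (Fin n) (Fin n) ℝ) → (Fin m → Finset (Fin n))) : Prop :=
  ∀ A A' : Fin m → Matrix (Fin n) (Fin n) ℝ,
    (∀ ℓ, IsValidMatrix (A ℓ)) → (∀ ℓ, IsValidMatrix (A' ℓ)) →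
    ∀ i : Fin n, (∀ ℓ, ∀ i', i' ≠ i → A ℓ i' = A' ℓ i') →
      ∀ ℓ, (i ∈ f A ℓ ↔ i ∈ f A' ℓ)

/-- `α`-optimality of an `(n,m,k)`-assignment mechanism. -/
def AlphaOptimalAssign {n m : ℕ} (k : ℕ)
    (f : (Fin m → Matrix (Fin n) (Fin n) ℝ) → (Fin m → Finset (Fin n)))
    (α : ℝ) : Prop :=
  ∀ A : Fin m → Matrix (Fin n) (Fin n) ℝ, (∀ ℓ, IsValidMatrix (A ℓ)) →
    α * optAssign m k A ≤ totalScore A (f A)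


/-!
Extend the instance on `n` agents by `ñ - n` dummy agents who neither cast nor receive any
weight, run the `(ñ,m,k̃)`-mechanism on it and keep the selected real agents. Dummy agents
cannot change a real agent's score, so feasibility and impartiality carry over and the
mechanism's score equals the score of the original one on the padded instance. For
optimality, keeping only the `k̃` best agents of each set of an optimal `k`-assignment retains
at least a `k̃/k` fraction of its score, so `k̃ · opt_k ≤ k · opt_k̃`.
-/

lemma Finset.exists_subset_card_eq_mul_sum_le {ι : Type*} [DecidableEq ι] (w : ι → ℝ)
    (S : Finset ι) (t : ℕ) (ht : t ≤ S.card) :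
    ∃ T ⊆ S, T.card = t ∧ (t : ℝ) * ∑ x ∈ S, w x ≤ S.card * ∑ x ∈ T, w x := by
  obtain ⟨d, hd⟩ := Nat.exists_eq_add_of_le ht
  induction d generalizing S with
  | zero => exact ⟨S, Subset.rfl, by omega, by rw [hd, Nat.add_zero]⟩
  | succ d ih =>
    obtain ⟨x, hxS, hx_min⟩ := S.exists_min_image w (card_pos.1 (by omega))
    have hcard : (S.erase x).card = t + d := by rw [card_erase_of_mem hxS]; omega
    obtain ⟨T, hTS, hTcard, hT⟩ := ih (S.erase x) (by omega) hcard
    refine ⟨T, hTS.trans (erase_subset x S), hTcard, ?_⟩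
    have hxT : (t : ℝ) * w x ≤ ∑ y ∈ T, w y := by
      simpa [hTcard] using
        card_nsmul_le_sum T w (w x) fun y hy => hx_min y (erase_subset x S (hTS hy))
    rw [hcard] at hT
    rw [← add_sum_erase S w hxS, hd]
    push_cast at hT ⊢
    linarith

lemma Finset.exists_subset_card_le_mul_sum_le {ι : Type*} [DecidableEq ι] {w : ι → ℝ}
    (hw : ∀ x, 0 ≤ w x) {S : Finset ι} {k t : ℕ} (hS : S.card ≤ k) (htk : t ≤ k) :
    ∃ T ⊆ S, T.card ≤ t ∧ (t : ℝ) * ∑ x ∈ S, w x ≤ k * ∑ x ∈ T, w x := by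
  rcases le_or_gt t S.card with htS | hSt
  · obtain ⟨T, hTS, hTcard, hT⟩ := S.exists_subset_card_eq_mul_sum_le w t htS
    refine ⟨T, hTS, hTcard.le, hT.trans ?_⟩
    gcongr
    exact sum_nonneg fun x _ => hw x
  · refine ⟨S, Subset.rfl, hSt.le, ?_⟩
    gcongr
    exact sum_nonneg fun x _ => hw x

lemma FeasibleAssignment.mono {n m k k' : ℕ} {X : Fin m → Finset (Fin n)}
    (hX : FeasibleAssignment m k X) (hk : k ≤ k') : FeasibleAssignment m k' X :=
  ⟨fun ℓ => (hX.1 ℓ).trans hk, hX.2⟩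

section Padding

variable {n N m : ℕ} (e : Fin n ↪ Fin N)

lemma FeasibleAssignment.map {k : ℕ} {X : Fin m → Finset (Fin n)}
    (hX : FeasibleAssignment m k X) : FeasibleAssignment m k fun ℓ => (X ℓ).map e :=
  ⟨fun ℓ => (card_map e).trans_le (hX.1 ℓ),
    fun ℓ ℓ' hne => (disjoint_map e).2 (hX.2 ℓ ℓ' hne)⟩

lemma FeasibleAssignment.preimage {k : ℕ} {X : Fin m → Finset (Fin N)}
    (hX : FeasibleAssignment m k X) :
    FeasibleAssignment m k fun ℓ => (X ℓ).preimage e e.injective.injOn :=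
  ⟨fun ℓ => (card_le_card_of_injOn e (fun _ ha => mem_preimage.1 ha) e.injective.injOn).trans
      (hX.1 ℓ),
    fun ℓ ℓ' hne => disjoint_preimage (hX.2 ℓ ℓ' hne)⟩

/-- Extension by zero along `e`: the agents outside its image are dummies. -/
noncomputable def padMatrix (A : Matrix (Fin n) (Fin n) ℝ) : Matrix (Fin N) (Fin N) ℝ :=
  fun i j => Function.extend (Prod.map e e) (Function.uncurry A) 0 (i, j)

@[simp]
lemma padMatrix_apply_apply (A : Matrix (Fin n) (Fin n) ℝ) (a b : Fin n) :
    padMatrix e A (e a) (e b) = A a b :=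
  (e.injective.prodMap e.injective).extend_apply _ _ (a, b)

lemma padMatrix_apply_of_notMem {A : Matrix (Fin n) (Fin n) ℝ} {i j : Fin N}
    (h : i ∉ Set.range e ∨ j ∉ Set.range e) : padMatrix e A i j = 0 :=
  Function.extend_apply' _ _ _ fun ⟨⟨a, b⟩, hab⟩ => by
    simp only [Prod.map, Prod.mk.injEq] at hab
    exact h.elim (· ⟨a, hab.1⟩) (· ⟨b, hab.2⟩)

lemma IsValidMatrix.padMatrix {A : Matrix (Fin n) (Fin n) ℝ} (hA : IsValidMatrix A) :
    IsValidMatrix (padMatrix e A) := by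
  refine ⟨fun i j => ?_, fun i => ?_⟩
  · by_cases h : i ∈ Set.range e ∧ j ∈ Set.range e
    · obtain ⟨⟨a, rfl⟩, ⟨b, rfl⟩⟩ := h
      simpa using hA.1 a b
    · rw [padMatrix_apply_of_notMem e (not_and_or.1 h)]
  · by_cases h : i ∈ Set.range e
    · obtain ⟨a, rfl⟩ := h
      simpa using hA.2 a
    · exact padMatrix_apply_of_notMem e (.inl h)

lemma padMatrix_row_eq {A A' : Matrix (Fin n) (Fin n) ℝ} {a : Fin n}
    (h : ∀ a', a' ≠ a → A a' = A' a') {i : Fin N} (hi : i ≠ e a) :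
    padMatrix e A i = padMatrix e A' i := by
  funext j
  by_cases hij : i ∈ Set.range e ∧ j ∈ Set.range e
  · obtain ⟨⟨a', rfl⟩, ⟨b, rfl⟩⟩ := hij
    simp [h a' (ne_of_apply_ne e hi)]
  · rw [padMatrix_apply_of_notMem e (not_and_or.1 hij),
      padMatrix_apply_of_notMem e (not_and_or.1 hij)]

lemma score_eq_sum_sum (A : Matrix (Fin n) (Fin n) ℝ) (S : Finset (Fin n)) :
    score A S = ∑ j ∈ S, ∑ i, A i j :=
  sum_comm

lemma score_padMatrix (A : Matrix (Fin n) (Fin n) ℝ) (S : Finset (Fin N)) :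
    score (padMatrix e A) S = score A (S.preimage e e.injective.injOn) := by
  rw [score_eq_sum_sum, score_eq_sum_sum, ← sum_preimage e S e.injective.injOn _
    fun j _ hj => sum_eq_zero fun i _ => padMatrix_apply_of_notMem e (.inr hj)]
  refine sum_congr rfl fun b _ => (Fintype.sum_of_injective e e.injective _ _
    (fun i hi => padMatrix_apply_of_notMem e (.inl hi)) fun a => ?_).symm
  exact (padMatrix_apply_apply e A a b).symm

lemma score_padMatrix_map (A : Matrix (Fin n) (Fin n) ℝ) (S : Finset (Fin n)) :
    score (padMatrix e A) (S.map e) = score A S := by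
  rw [score_padMatrix, preimage_map]

noncomputable def restrictMechanism
    (g : (Fin m → Matrix (Fin N) (Fin N) ℝ) → Fin m → Finset (Fin N))
    (A : Fin m → Matrix (Fin n) (Fin n) ℝ) (ℓ : Fin m) : Finset (Fin n) :=
  (g (fun ℓ' => padMatrix e (A ℓ')) ℓ).preimage e e.injective.injOn

lemma ImpartialAssign.restrictMechanism
    {g : (Fin m → Matrix (Fin N) (Fin N) ℝ) → Fin m → Finset (Fin N)}
    (hg : ImpartialAssign g) : ImpartialAssign (restrictMechanism e g) := by
  intro A A' hA hA' a hrow ℓ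
  simp only [_root_.restrictMechanism, mem_preimage]
  exact hg _ _ (fun ℓ => (hA ℓ).padMatrix e) (fun ℓ => (hA' ℓ).padMatrix e) (e a)
    (fun ℓ _ hi => padMatrix_row_eq e (hrow ℓ) hi) ℓ

lemma totalScore_restrictMechanism
    (g : (Fin m → Matrix (Fin N) (Fin N) ℝ) → Fin m → Finset (Fin N))
    (A : Fin m → Matrix (Fin n) (Fin n) ℝ) :
    totalScore A (restrictMechanism e g A) =
      totalScore (fun ℓ => padMatrix e (A ℓ)) (g fun ℓ => padMatrix e (A ℓ)) := by
  simp only [totalScore, score_padMatrix, _root_.restrictMechanism]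

end Padding

section Optimum

variable {n m : ℕ} {A : Fin m → Matrix (Fin n) (Fin n) ℝ}

lemma totalScore_nonneg (hA : ∀ ℓ, IsValidMatrix (A ℓ)) (X : Fin m → Finset (Fin n)) :
    0 ≤ totalScore A X :=
  sum_nonneg fun ℓ _ => sum_nonneg fun i _ => sum_nonneg fun j _ => (hA ℓ).1 i j

lemma finite_totalScores (k : ℕ) (A : Fin m → Matrix (Fin n) (Fin n) ℝ) :
    {x : ℝ | ∃ X : Fin m → Finset (Fin n),
      FeasibleAssignment m k X ∧ totalScore A X = x}.Finite :=
  (Set.finite_range (totalScore A)).subset fun _ ⟨X, _, hX⟩ => ⟨X, hX⟩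

lemma le_optAssign {k : ℕ} {X : Fin m → Finset (Fin n)} (hX : FeasibleAssignment m k X) :
    totalScore A X ≤ optAssign m k A :=
  le_csSup (finite_totalScores k A).bddAbove ⟨X, hX, rfl⟩

lemma exists_totalScore_eq_optAssign (k : ℕ) (A : Fin m → Matrix (Fin n) (Fin n) ℝ) :
    ∃ X, FeasibleAssignment m k X ∧ totalScore A X = optAssign m k A := by
  have hempty : FeasibleAssignment m k fun _ => (∅ : Finset (Fin n)) :=
    ⟨fun _ => by simp, fun _ _ _ => disjoint_empty_left _⟩
  refine Set.Nonempty.csSup_mem ?_ (finite_totalScores k A)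
  exact ⟨_, _, hempty, rfl⟩

lemma optAssign_nonneg (k : ℕ) (hA : ∀ ℓ, IsValidMatrix (A ℓ)) : 0 ≤ optAssign m k A := by
  obtain ⟨X, -, hX⟩ := exists_totalScore_eq_optAssign k A
  exact hX ▸ totalScore_nonneg hA X

lemma mul_optAssign_le_mul_optAssign (hA : ∀ ℓ, IsValidMatrix (A ℓ)) {k t : ℕ}
    (htk : t ≤ k) : t * optAssign m k A ≤ k * optAssign m t A := by
  obtain ⟨X, hX, hXopt⟩ := exists_totalScore_eq_optAssign k A
  have hbest : ∀ ℓ, ∃ T ⊆ X ℓ, T.card ≤ t ∧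
      (t : ℝ) * score (A ℓ) (X ℓ) ≤ k * score (A ℓ) T := fun ℓ => by
    simp only [score_eq_sum_sum]
    exact exists_subset_card_le_mul_sum_le (fun j => sum_nonneg fun i _ => (hA ℓ).1 i j)
      (hX.1 ℓ) htk
  choose T hTX hTcard hT using hbest
  have hTfeas : FeasibleAssignment m t T :=
    ⟨hTcard, fun ℓ ℓ' hne => (hX.2 ℓ ℓ' hne).mono (hTX ℓ) (hTX ℓ')⟩
  calc (t : ℝ) * optAssign m k A = ∑ ℓ, t * score (A ℓ) (X ℓ) := by
        rw [← hXopt, totalScore, mul_sum]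
    _ ≤ ∑ ℓ, k * score (A ℓ) (T ℓ) := sum_le_sum fun ℓ _ => hT ℓ
    _ = k * totalScore A T := by rw [totalScore, mul_sum]
    _ ≤ k * optAssign m t A := by gcongr; exact le_optAssign hTfeas

lemma optAssign_le_optAssign_padMatrix {N : ℕ} (e : Fin n ↪ Fin N) (k : ℕ) :
    optAssign m k A ≤ optAssign m k fun ℓ => padMatrix e (A ℓ) := by
  obtain ⟨X, hX, hXopt⟩ := exists_totalScore_eq_optAssign k A
  calc optAssign m k A = totalScore (fun ℓ => padMatrix e (A ℓ)) fun ℓ => (X ℓ).map e := by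
        simp only [← hXopt, totalScore, score_padMatrix_map]
    _ ≤ _ := le_optAssign (hX.map e)

lemma div_mul_optAssign_le_optAssign_padMatrix (hA : ∀ ℓ, IsValidMatrix (A ℓ)) {N : ℕ}
    (e : Fin n ↪ Fin N) {k t : ℕ} (htk : t ≤ k) :
    (t / k : ℝ) * optAssign m k A ≤ optAssign m t fun ℓ => padMatrix e (A ℓ) := by
  rcases k.eq_zero_or_pos with rfl | hk
  · simpa using optAssign_nonneg t fun ℓ => (hA ℓ).padMatrix e
  rw [div_mul_eq_mul_div, div_le_iff₀ (by exact_mod_cast hk), mul_comm _ (k : ℝ)]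
  exact (mul_optAssign_le_mul_optAssign hA htk).trans
    (by gcongr; exact optAssign_le_optAssign_padMatrix e t)

end Optimum

theorem stmt16_general (ntil m ktil : ℕ) (αtil : ℝ)
    (hex : ∃ g : (Fin m → Matrix (Fin ntil) (Fin ntil) ℝ) → (Fin m → Finset (Fin ntil)),
      (∀ A, FeasibleAssignment m ktil (g A)) ∧ ImpartialAssign g ∧
      AlphaOptimalAssign ktil g αtil) :
    ∀ k n : ℕ, ktil ≤ k → n ≤ ntil → k < n → m * k ≤ n →
    ∃ f : (Fin m → Matrix (Fin n) (Fin n) ℝ) → (Fin m → Finset (Fin n)),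
      (∀ A, FeasibleAssignment m k (f A)) ∧ ImpartialAssign f ∧
      AlphaOptimalAssign k f (((ktil : ℝ) / (k : ℝ)) * αtil) := by
  intro k n hk hn _ _
  obtain ⟨g, hg_feas, hg_imp, hg_opt⟩ := hex
  let e := Fin.castLEEmb hn
  refine ⟨restrictMechanism e g, fun A => ((hg_feas _).mono hk).preimage e,
    hg_imp.restrictMechanism e, fun A hA => ?_⟩
  have hpad : ∀ ℓ, IsValidMatrix (padMatrix e (A ℓ)) := fun ℓ => (hA ℓ).padMatrix e
  rw [totalScore_restrictMechanism]
  rcases le_total 0 αtil with hα | hα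
  · calc (ktil / k * αtil : ℝ) * optAssign m k A
          = αtil * (ktil / k * optAssign m k A) := by ring
      _ ≤ αtil * optAssign m ktil fun ℓ => padMatrix e (A ℓ) := by
        gcongr; exact div_mul_optAssign_le_optAssign_padMatrix hA e hk
      _ ≤ _ := hg_opt _ hpad
  · -- a nonpositive guarantee holds for any mechanism, as all scores are nonnegative
    refine le_trans ?_ (totalScore_nonneg hpad _)
    exact mul_nonpos_of_nonpos_of_nonneg (mul_nonpos_of_nonneg_of_nonpos (by positivity) hα)
      (optAssign_nonneg k hA)

/-- Generalization lemma for assignments: an impartial `α̃`-optimal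
`(ñ,m,k̃)`-assignment mechanism with `m·k̃ ≤ ñ` yields, for every `k, n` with
`k̃ ≤ k`, `n ≤ ñ`, `k < n` and `m·k ≤ n`, an impartial `(k̃/k)·α̃`-optimal
`(n,m,k)`-assignment mechanism. -/
theorem stmt16 (ntil m ktil : ℕ) (hmk : m * ktil ≤ ntil) (αtil : ℝ)
    (hex : ∃ g : (Fin m → Matrix (Fin ntil) (Fin ntil) ℝ) → (Fin m → Finset (Fin ntil)),
      (∀ A, FeasibleAssignment m ktil (g A)) ∧ ImpartialAssign g ∧
      AlphaOptimalAssign ktil g αtil) :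
    ∀ k n : ℕ, ktil ≤ k → n ≤ ntil → k < n → m * k ≤ n →
    ∃ f : (Fin m → Matrix (Fin n) (Fin n) ℝ) → (Fin m → Finset (Fin n)),
      (∀ A, FeasibleAssignment m k (f A)) ∧ ImpartialAssign f ∧
      AlphaOptimalAssign k f (((ktil : ℝ) / (k : ℝ)) * αtil) :=
  stmt16_general ntil m ktil αtil hex
end
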